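/- arXiv:0710.5415 — 2 statements merged into one kernel-verified Lean document; each statement's English description precedes it below -/
import Mathlib

section
/- Let n ≥ 1 and let 𝒪 ⊆ ℕ^n be a finite nonempty order ideal with extreme corner (m_1, …, m_n), where m_i = max{α_i : α ∈ 𝒪}. Let S ⊆ [n] be nonempty, and let α, β ∈ ℕ^n be such that α_i > m_i for all i ∈ S and β_i = 0 for all i ∉ S. Then ind_𝒪(α + β) = ind_𝒪(α) + |β|, where |β| = β_1 + ⋯ + β_n. -/
/-- An order ideal in ℕ^n: a set of exponent vectors closed under componentwise division. -/
def IsOrderIdeal {n : ℕ} (O : Set (Fin n →₀ ℕ)) : Prop :=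
  ∀ α ∈ O, ∀ β : Fin n →₀ ℕ, β ≤ α → β ∈ O

/-- The border of a set `C ⊆ ℕ^n`: `∂C = {α + e_i : α ∈ C, i} \ C`. -/
def border {n : ℕ} (C : Set (Fin n →₀ ℕ)) : Set (Fin n →₀ ℕ) :=
  {γ | ∃ α ∈ C, ∃ i : Fin n, γ = α + Finsupp.single i 1} \ C

/-- The closed higher borders: `∂̄⁰O = O`, `∂̄ᵏO = ∂(∂̄ᵏ⁻¹O) ∪ ∂̄ᵏ⁻¹O`. -/
def closedBorder {n : ℕ} (O : Set (Fin n →₀ ℕ)) : ℕ → Set (Fin n →₀ ℕ)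
  | 0 => O
  | k + 1 => border (closedBorder O k) ∪ closedBorder O k

/-- The higher borders: `∂⁰O = O`, `∂ᵏO = ∂(∂̄ᵏ⁻¹O)`. -/
def borderIter {n : ℕ} (O : Set (Fin n →₀ ℕ)) : ℕ → Set (Fin n →₀ ℕ)
  | 0 => O
  | k + 1 => border (closedBorder O k)

/-- The index of `α` relative to `O`: the minimal `k` with `α ∈ ∂̄ᵏO`. -/
noncomputable def ind {n : ℕ} (O : Set (Fin n →₀ ℕ)) (α : Fin n →₀ ℕ) : ℕ :=
  sInf {k | α ∈ closedBorder O k}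

/-- Total degree of an exponent vector. -/
def deg {n : ℕ} (α : Fin n →₀ ℕ) : ℕ := ∑ i, α i

/-!
Every element of `∂̄ᵏO` is `δ + ε` with `δ ∈ O` and `|ε| ≤ k`, and conversely, so `ind_O γ` is the
least `|ε|` over such decompositions `γ = δ + ε`. In every coordinate where `β` is nonzero, `α`
already dominates every `δ ∈ O`; hence any decomposition `α + β = δ + ε` has `β ≤ ε`, and the
decompositions of `α + β` are exactly those of `α` with `β` added to `ε`.
-/

open Finsupp

lemma deg_eq_degree {n : ℕ} (α : Fin n →₀ ℕ) : deg α = α.degree :=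
  (degree_eq_sum α).symm

lemma IsOrderIdeal.zero_mem {n : ℕ} {O : Set (Fin n →₀ ℕ)} (hO : IsOrderIdeal O)
    (hne : O.Nonempty) : 0 ∈ O :=
  let ⟨γ, hγ⟩ := hne
  hO γ hγ 0 zero_le

section ClosedBorder

variable {n : ℕ} {O : Set (Fin n →₀ ℕ)}

lemma closedBorder_monotone (O : Set (Fin n →₀ ℕ)) : Monotone (closedBorder O) :=
  monotone_nat_of_le_succ fun _ => Set.subset_union_right

lemma add_single_mem_closedBorder_succ {γ : Fin n →₀ ℕ} {k : ℕ} (hγ : γ ∈ closedBorder O k)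
    (i : Fin n) : γ + single i 1 ∈ closedBorder O (k + 1) := by
  by_cases h : γ + single i 1 ∈ closedBorder O k
  · exact Or.inr h
  · exact Or.inl ⟨⟨γ, hγ, i, rfl⟩, h⟩

lemma add_mem_closedBorder {γ : Fin n →₀ ℕ} {k : ℕ} (hγ : γ ∈ closedBorder O k)
    (ε : Fin n →₀ ℕ) : γ + ε ∈ closedBorder O (k + ε.degree) := by
  induction ε using Finsupp.induction_linear generalizing γ k with
  | zero => simpa
  | add f g hf hg => simpa [add_assoc] using hg (hf hγ)
  | single i b =>
    induction b with
    | zero => simpa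
    | succ b ih =>
      rw [degree_single] at ih ⊢
      rw [single_add, ← add_assoc, ← add_assoc]
      exact add_single_mem_closedBorder_succ ih i

lemma mem_closedBorder_iff {γ : Fin n →₀ ℕ} {k : ℕ} :
    γ ∈ closedBorder O k ↔ ∃ δ ∈ O, ∃ ε : Fin n →₀ ℕ, ε.degree ≤ k ∧ γ = δ + ε := by
  refine ⟨fun h => ?_, ?_⟩
  · induction k generalizing γ with
    | zero => exact ⟨γ, h, 0, by simp, by simp⟩
    | succ k ih =>
      rcases h with ⟨⟨a, ha, i, rfl⟩, -⟩ | h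
      · obtain ⟨δ, hδ, ε, hε, rfl⟩ := ih ha
        refine ⟨δ, hδ, ε + single i 1, ?_, add_assoc δ ε _⟩
        rw [map_add, degree_single]
        omega
      · obtain ⟨δ, hδ, ε, hε, rfl⟩ := ih h
        exact ⟨δ, hδ, ε, hε.trans k.le_succ, rfl⟩
  · rintro ⟨δ, hδ, ε, hε, rfl⟩
    exact closedBorder_monotone O (by omega) (add_mem_closedBorder (k := 0) hδ ε)

lemma ind_le_iff (h0 : (0 : Fin n →₀ ℕ) ∈ O) {γ : Fin n →₀ ℕ} {k : ℕ} :
    ind O γ ≤ k ↔ γ ∈ closedBorder O k := by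
  have hne : {k | γ ∈ closedBorder O k}.Nonempty :=
    ⟨γ.degree, by simpa using add_mem_closedBorder (k := 0) h0 γ⟩
  exact ⟨fun h => closedBorder_monotone O h (Nat.sInf_mem hne), fun h => Nat.sInf_le h⟩

lemma add_mem_closedBorder_iff {α β : Fin n →₀ ℕ}
    (hdom : ∀ δ ∈ O, ∀ i, β i ≠ 0 → δ i ≤ α i) {k : ℕ} :
    α + β ∈ closedBorder O k ↔ β.degree ≤ k ∧ α ∈ closedBorder O (k - β.degree) := by
  refine ⟨fun h => ?_, fun ⟨hk, h⟩ => ?_⟩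
  · obtain ⟨δ, hδ, ε, hε, heq⟩ := mem_closedBorder_iff.1 h
    have hβε : β ≤ ε := fun i => by
      have hi : α i + β i = δ i + ε i := by simpa using DFunLike.congr_fun heq i
      by_cases hβi : β i = 0
      · exact hβi ▸ zero_le
      · have := hdom δ hδ i hβi
        omega
    obtain ⟨ε', rfl⟩ := le_iff_exists_add.1 hβε
    have hα : α = δ + ε' := add_right_cancel (b := β) (by rw [heq]; abel)
    rw [map_add] at hε
    exact ⟨by omega, mem_closedBorder_iff.2 ⟨δ, hδ, ε', by omega, hα⟩⟩
  · simpa [Nat.sub_add_cancel hk] using add_mem_closedBorder h β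

end ClosedBorder

theorem ind_increase_general_general (n : ℕ) (O : Set (Fin n →₀ ℕ))
    (hne : O.Nonempty) (hO : IsOrderIdeal O)
    (m : Fin n → ℕ) (hm : ∀ i, IsGreatest {a : ℕ | ∃ α ∈ O, α i = a} (m i))
    (S : Set (Fin n)) (α β : Fin n →₀ ℕ)
    (hα : ∀ i ∈ S, m i < α i) (hβ : ∀ i ∉ S, β i = 0) :
    ind O (α + β) = ind O α + deg β := by
  have h0 := hO.zero_mem hne
  have hdom : ∀ δ ∈ O, ∀ i, β i ≠ 0 → δ i ≤ α i := fun δ hδ i hi =>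
    ((hm i).2 ⟨δ, hδ, rfl⟩).trans (hα i (not_not.1 (mt (hβ i) hi))).le
  refine eq_of_forall_ge_iff fun k => ?_
  rw [ind_le_iff h0, add_mem_closedBorder_iff hdom, ← ind_le_iff h0, deg_eq_degree]
  omega

/-- If `O ⊆ ℕ^n` is a finite nonempty order ideal with extreme corner `(m_1, …, m_n)`,
`S ⊆ [n]` is nonempty, `α_i > m_i` for `i ∈ S` and `β_i = 0` for `i ∉ S`, then
`ind_O(α + β) = ind_O(α) + |β|`. -/
theorem ind_increase_general (n : ℕ) (hn : 1 ≤ n) (O : Set (Fin n →₀ ℕ))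
    (hfin : O.Finite) (hne : O.Nonempty) (hO : IsOrderIdeal O)
    (m : Fin n → ℕ) (hm : ∀ i, IsGreatest {a : ℕ | ∃ α ∈ O, α i = a} (m i))
    (S : Set (Fin n)) (hS : S.Nonempty) (α β : Fin n →₀ ℕ)
    (hα : ∀ i ∈ S, m i < α i) (hβ : ∀ i ∉ S, β i = 0) :
    ind O (α + β) = ind O α + deg β :=
  ind_increase_general_general n O hne hO m hm S α β hα hβ
end

section
/- Let 𝒪 ⊆ ℕ² be the finite nonempty order ideal determined by a partition λ = (λ_1 ≥ ⋯ ≥ λ_m ≥ 1), i.e. (a_1, a_2) ∈ 𝒪 iff a_1 < m and a_2 < λ_{a_1+1}. Then in ℚ[[y_1, y_2]]: Σ_{α ∈ ℕ²} ind_𝒪(α) y^α = y_1^m y_2^{λ_1} Σ_{(i_1,i_2) ∈ ℕ²} (i_1 + i_2 + ind_𝒪(m, λ_1)) y_1^{i_1} y_2^{i_2} + Σ_{j=0}^{m−1} y_1^j y_2^{λ_1} Σ_{i ≥ 0} (i + ind_𝒪(j, λ_1)) y_2^i + Σ_{j=0}^{λ_1−1} y_1^m y_2^j Σ_{i ≥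 0} (i + ind_𝒪(m, j)) y_1^i + Σ_{(a_1, a_2) ∉ 𝒪, a_1 < m, a_2 < λ_1} ind_𝒪(a_1, a_2) y_1^{a_1} y_2^{a_2}. -/
/-- The multivariate formal power series with prescribed coefficients. -/
noncomputable def seriesOfCoeff {n : ℕ} (f : (Fin n →₀ ℕ) → ℚ) : MvPowerSeries (Fin n) ℚ := f

/-- The point `(a, b) ∈ ℕ²` as a finitely supported function. -/
noncomputable def pt (a b : ℕ) : Fin 2 →₀ ℕ := Finsupp.single 0 a + Finsupp.single 1 b

/-! The index of `α` is the least `|α - β|` over the `β ∈ O` below `α`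
(`mem_closedBorder_iff`). Since `O` lies in the box `[0, m) × [0, λ₁)`, pushing a point out of
the box brings no new `β` below it, so the index grows by exactly the distance travelled:
`ind (a, b) = ind (min a m, min b λ₁) + (a - m) + (b - λ₁)`. Comparing coefficients of
`y₁^a y₂^b`, each of the four regions of `ℕ²` cut out by `a < m` and `b < λ₁` is accounted for
by exactly one of the four summands. -/

open Finsupp

section Index

variable {n : ℕ} {O : Set (Fin n →₀ ℕ)} {α β : Fin n →₀ ℕ}

lemma degree_tsub_add_degree (h : β ≤ α) : (α - β).degree + β.degree = α.degree := by
  rw [← map_add, tsub_add_cancel_of_le h]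

lemma mem_closedBorder_iff_s13 {k : ℕ} :
    α ∈ closedBorder O k ↔ ∃ β ∈ O, β ≤ α ∧ α.degree ≤ β.degree + k := by
  induction k generalizing α with
  | zero =>
    refine ⟨fun h => ⟨α, h, le_rfl, le_rfl⟩, fun ⟨β, hβ, hle, hdeg⟩ => ?_⟩
    have hsub : (α - β).degree = 0 := by have := degree_tsub_add_degree hle; omega
    rw [degree_eq_zero_iff, tsub_eq_zero_iff_le] at hsub
    rwa [← le_antisymm hle hsub]
  | succ k ih =>
    simp only [closedBorder, border, Set.mem_union, Set.mem_sdiff, Set.mem_ofPred_eq, ih]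
    constructor
    · rintro (⟨⟨α', ⟨β, hβ, hle, hdeg⟩, i, rfl⟩, -⟩ | ⟨β, hβ, hle, hdeg⟩)
      · exact ⟨β, hβ, hle.trans le_self_add, by simp only [map_add, degree_single]; omega⟩
      · exact ⟨β, hβ, hle, by omega⟩
    · rintro ⟨β, hβ, hle, hdeg⟩
      by_cases hk : α.degree ≤ β.degree + k
      · exact Or.inr ⟨β, hβ, hle, hk⟩
      -- `α` lies strictly above `β`; stepping down once where they differ lands in `∂̄ᵏO`.
      obtain ⟨i, hi⟩ : ∃ i, β i < α i := by
        by_contra! h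
        exact hk ((degree_mono h).trans le_self_add)
      have hi' : single i 1 ≤ α := by
        rw [Finsupp.single_le_iff]; omega
      have hle' : β ≤ α - single i 1 := fun j => by
        have := hle j
        rw [tsub_apply, single_apply]
        split_ifs with h
        · subst h; omega
        · omega
      have hdeg' := degree_tsub_add_degree hi'
      rw [degree_single] at hdeg'
      by_cases hα : ∃ β ∈ O, β ≤ α ∧ α.degree ≤ β.degree + k
      · exact Or.inr hα
      · exact Or.inl ⟨⟨α - single i 1, ⟨β, hβ, hle', by omega⟩, i,
          (tsub_add_cancel_of_le hi').symm⟩, hα⟩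

lemma ind_le_of_mem_closedBorder {k : ℕ} (h : α ∈ closedBorder O k) : ind O α ≤ k :=
  Nat.sInf_le h

lemma ind_eq_zero_of_mem (h : α ∈ O) : ind O α = 0 :=
  Nat.le_zero.mp (ind_le_of_mem_closedBorder h)

lemma mem_closedBorder_ind (h : ∃ β ∈ O, β ≤ α) : α ∈ closedBorder O (ind O α) := by
  obtain ⟨β, hβ, hle⟩ := h
  exact Nat.sInf_mem (s := {k | α ∈ closedBorder O k})
    ⟨α.degree, mem_closedBorder_iff_s13.mpr ⟨β, hβ, hle, le_add_self⟩⟩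

lemma indicator_compl_ind : Oᶜ.indicator (fun t => (ind O t : ℚ)) = fun t => (ind O t : ℚ) :=
  Set.indicator_eq_self.mpr fun _ ht hO => ht (by simp [ind_eq_zero_of_mem hO])

lemma ind_add_of_forall_le {δ : Fin n →₀ ℕ} (hα : ∃ β ∈ O, β ≤ α)
    (hδ : ∀ β ∈ O, β ≤ α + δ → β ≤ α) : ind O (α + δ) = ind O α + δ.degree := by
  apply le_antisymm
  · obtain ⟨β, hβ, hle, hdeg⟩ := mem_closedBorder_iff_s13.mp (mem_closedBorder_ind hα)
    refine ind_le_of_mem_closedBorder (mem_closedBorder_iff_s13.mpr ⟨β, hβ, hle.trans le_self_add, ?_⟩)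
    rw [map_add]; omega
  · obtain ⟨β, hβ, hle, hdeg⟩ := mem_closedBorder_iff_s13.mp
      (mem_closedBorder_ind (α := α + δ) (hα.imp fun β ⟨hβ, hle⟩ => ⟨hβ, hle.trans le_self_add⟩))
    have hβα := hδ β hβ hle
    have hind := ind_le_of_mem_closedBorder (k := ind O (α + δ) - δ.degree)
      (mem_closedBorder_iff_s13.mpr ⟨β, hβ, hβα, by rw [map_add] at hdeg; omega⟩)
    have := degree_mono hβα
    rw [map_add] at hdeg
    omega

end Index

section Plane

open MvPowerSeries

lemma coeff_seriesOfCoeff {n : ℕ} (f : (Fin n →₀ ℕ) → ℚ) (d : Fin n →₀ ℕ) :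
    coeff d (seriesOfCoeff f) = f d := rfl

lemma coeff_monomial_one_mul_seriesOfCoeff {n : ℕ} (d e : Fin n →₀ ℕ) (f : (Fin n →₀ ℕ) → ℚ) :
    coeff d (monomial e 1 * seriesOfCoeff f) = if e ≤ d then f (d - e) else 0 := by
  rw [coeff_monomial_mul, one_mul]; rfl

@[simp] lemma pt_apply_zero (a b : ℕ) : pt a b 0 = a := by simp [pt]

@[simp] lemma pt_apply_one (a b : ℕ) : pt a b 1 = b := by simp [pt]

lemma pt_apply_zero_apply_one (α : Fin 2 →₀ ℕ) : pt (α 0) (α 1) = α := by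
  ext i; fin_cases i <;> simp

lemma le_pt_iff {β : Fin 2 →₀ ℕ} {a b : ℕ} : β ≤ pt a b ↔ β 0 ≤ a ∧ β 1 ≤ b := by
  rw [Finsupp.le_def, Fin.forall_fin_two, pt_apply_zero, pt_apply_one]

lemma pt_le_pt {a b c d : ℕ} : pt a b ≤ pt c d ↔ a ≤ c ∧ b ≤ d := by
  simp [le_pt_iff]

lemma pt_inj {a b c d : ℕ} : pt a b = pt c d ↔ a = c ∧ b = d := by
  simp [le_antisymm_iff, pt_le_pt, and_and_and_comm]

lemma pt_add_pt (a b c d : ℕ) : pt a b + pt c d = pt (a + c) (b + d) := by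
  simp [pt, single_add]; abel

lemma pt_tsub_pt (a b c d : ℕ) : pt a b - pt c d = pt (a - c) (b - d) := by
  rw [← pt_apply_zero_apply_one (pt a b - pt c d)]; simp

lemma degree_pt (a b : ℕ) : (pt a b).degree = a + b := by
  simp [pt]

lemma ind_pt_eq_ind_pt_min {O : Set (Fin 2 →₀ ℕ)} {m L : ℕ} (h0 : (0 : Fin 2 →₀ ℕ) ∈ O)
    (hbox : ∀ β ∈ O, β 0 < m ∧ β 1 < L) (a b : ℕ) :
    ind O (pt a b) = ind O (pt (min a m) (min b L)) + (a - m) + (b - L) := by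
  have h := ind_add_of_forall_le (α := pt (min a m) (min b L)) (δ := pt (a - m) (b - L))
    ⟨0, h0, zero_le⟩ fun β hβ hle => by
      have := hbox β hβ
      rw [pt_add_pt, le_pt_iff] at hle
      rw [le_pt_iff]; omega
  rw [pt_add_pt, degree_pt, ← add_assoc] at h
  rwa [show min a m + (a - m) = a by omega, show min b L + (b - L) = b by omega] at h

lemma coeff_pt_sum_vertical_rays (m L a b : ℕ) (c : ℕ → ℚ) :
    coeff (pt a b) (∑ j ∈ Finset.range m, monomial (pt j L) (1 : ℚ) *
      seriesOfCoeff ({β : Fin 2 →₀ ℕ | β 0 = 0}.indicator fun β => (β 1 : ℚ) + c j)) =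
    if a < m ∧ L ≤ b then ((b - L : ℕ) : ℚ) + c a else 0 := by
  have h : ∀ j, coeff (pt a b) (monomial (pt j L) (1 : ℚ) *
      seriesOfCoeff ({β : Fin 2 →₀ ℕ | β 0 = 0}.indicator fun β => (β 1 : ℚ) + c j)) =
      if a = j then (if L ≤ b then ((b - L : ℕ) : ℚ) + c a else 0) else 0 := by
    intro j
    simp only [coeff_monomial_one_mul_seriesOfCoeff, pt_le_pt, pt_tsub_pt, Set.indicator_apply,
      Set.mem_ofPred_eq, pt_apply_zero, pt_apply_one]
    split_ifs <;> first | omega | subst_vars; rfl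
  simp only [map_sum, h, Finset.sum_ite_eq, Finset.mem_range, ite_and]

lemma coeff_pt_sum_horizontal_rays (m L a b : ℕ) (c : ℕ → ℚ) :
    coeff (pt a b) (∑ j ∈ Finset.range L, monomial (pt m j) (1 : ℚ) *
      seriesOfCoeff ({β : Fin 2 →₀ ℕ | β 1 = 0}.indicator fun β => (β 0 : ℚ) + c j)) =
    if m ≤ a ∧ b < L then ((a - m : ℕ) : ℚ) + c b else 0 := by
  have h : ∀ j, coeff (pt a b) (monomial (pt m j) (1 : ℚ) *
      seriesOfCoeff ({β : Fin 2 →₀ ℕ | β 1 = 0}.indicator fun β => (β 0 : ℚ) + c j)) =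
      if b = j then (if m ≤ a then ((a - m : ℕ) : ℚ) + c b else 0) else 0 := by
    intro j
    simp only [coeff_monomial_one_mul_seriesOfCoeff, pt_le_pt, pt_tsub_pt, Set.indicator_apply,
      Set.mem_ofPred_eq, pt_apply_zero, pt_apply_one]
    split_ifs <;> first | omega | subst_vars; rfl
  simp only [map_sum, h, Finset.sum_ite_eq, Finset.mem_range]
  simp only [← ite_and, and_comm]

lemma coeff_pt_sum_box (m L a b : ℕ) (g : (Fin 2 →₀ ℕ) → ℚ) :
    coeff (pt a b)
      (∑ p ∈ Finset.range m ×ˢ Finset.range L, monomial (pt p.1 p.2) (g (pt p.1 p.2))) =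
    if a < m ∧ b < L then g (pt a b) else 0 := by
  have h : ∀ p : ℕ × ℕ, coeff (pt a b) (monomial (pt p.1 p.2) (g (pt p.1 p.2))) =
      if (a, b) = p then g (pt a b) else 0 := by
    rintro ⟨c, d⟩
    simp only [coeff_monomial, pt_inj, Prod.mk.injEq]
    split_ifs <;> simp_all
  simp only [map_sum, h, Finset.sum_ite_eq, Finset.mem_product, Finset.mem_range]

end Plane

/-- For the order ideal `O ⊆ ℕ²` given by a partition `λ = (λ_1 ≥ ⋯ ≥ λ_m ≥ 1)`, in `ℚ[[y₁,y₂]]`: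
`Σ_α ind_O(α) y^α
  = y₁^m y₂^{λ₁} Σ_{(i₁,i₂)} (i₁ + i₂ + ind_O(m,λ₁)) y₁^{i₁} y₂^{i₂}
  + Σ_{j<m} y₁^j y₂^{λ₁} Σ_i (i + ind_O(j,λ₁)) y₂^i
  + Σ_{j<λ₁} y₁^m y₂^j Σ_i (i + ind_O(m,j)) y₁^i
  + Σ_{(a₁,a₂) ∉ O, a₁<m, a₂<λ₁} ind_O(a₁,a₂) y₁^{a₁} y₂^{a₂}`. -/
theorem ind_genFun_dim2_formula (m : ℕ) (hm : 1 ≤ m) (l : Fin m → ℕ)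
    (hpos : ∀ i, 1 ≤ l i) (hdec : Antitone l)
    (O : Set (Fin 2 →₀ ℕ))
    (hO : O = {a : Fin 2 →₀ ℕ | ∃ h : a 0 < m, a 1 < l ⟨a 0, h⟩}) :
    seriesOfCoeff (fun α => (ind O α : ℚ)) =
      MvPowerSeries.monomial (R := ℚ) (pt m (l ⟨0, hm⟩)) (1 : ℚ) *
        seriesOfCoeff (fun β => (β 0 : ℚ) + (β 1 : ℚ) + (ind O (pt m (l ⟨0, hm⟩)) : ℚ))
      + ∑ j ∈ Finset.range m,
          MvPowerSeries.monomial (R := ℚ) (pt j (l ⟨0, hm⟩)) (1 : ℚ) *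
            seriesOfCoeff ({β : Fin 2 →₀ ℕ | β 0 = 0}.indicator
              fun β => (β 1 : ℚ) + (ind O (pt j (l ⟨0, hm⟩)) : ℚ))
      + ∑ j ∈ Finset.range (l ⟨0, hm⟩),
          MvPowerSeries.monomial (R := ℚ) (pt m j) (1 : ℚ) *
            seriesOfCoeff ({β : Fin 2 →₀ ℕ | β 1 = 0}.indicator
              fun β => (β 0 : ℚ) + (ind O (pt m j) : ℚ))
      + ∑ a ∈ Finset.range m ×ˢ Finset.range (l ⟨0, hm⟩),
          MvPowerSeries.monomial (R := ℚ) (pt a.1 a.2)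
            (Oᶜ.indicator (fun t => (ind O t : ℚ)) (pt a.1 a.2)) := by
  set L := l ⟨0, hm⟩
  have h0 : (0 : Fin 2 →₀ ℕ) ∈ O := by
    rw [hO]; exact ⟨hm, hpos _⟩
  have hbox : ∀ β ∈ O, β 0 < m ∧ β 1 < L := by
    rw [hO]; rintro β ⟨hβm, hβl⟩
    exact ⟨hβm, hβl.trans_le (hdec (Nat.zero_le _))⟩
  rw [indicator_compl_ind]
  ext α
  obtain ⟨a, b, rfl⟩ : ∃ a b, α = pt a b := ⟨α 0, α 1, (pt_apply_zero_apply_one α).symm⟩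
  rw [map_add, map_add, map_add, coeff_monomial_one_mul_seriesOfCoeff,
    coeff_pt_sum_vertical_rays m L _ _ (fun j => (ind O (pt j L) : ℚ)),
    coeff_pt_sum_horizontal_rays m L _ _ (fun j => (ind O (pt m j) : ℚ)),
    coeff_pt_sum_box m L _ _ (fun t => (ind O t : ℚ)), coeff_seriesOfCoeff,
    ind_pt_eq_ind_pt_min h0 hbox a b]
  simp only [pt_le_pt, pt_tsub_pt, pt_apply_zero, pt_apply_one]
  rcases lt_or_ge a m with ha | ha <;> rcases lt_or_ge b L with hb | hb
  · simp [ha, hb, ha.le, hb.le, ha.not_ge, hb.not_ge]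
  · simp [ha, hb, ha.le, ha.not_ge, hb.not_gt]; ring
  · simp [ha, hb, hb.le, hb.not_ge, ha.not_gt]; ring
  · simp [ha, hb, ha.not_gt, hb.not_gt]; ring
end
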